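/- Let X be a finite state space and A a finite action space. For each (i,a) let P̂ᵢᵃ ⊆ ℝⁿ be a nonempty compact set such that every q ∈ P̂ᵢᵃ satisfies qᵀ1 ≤ 1 + β and σ_{P̂ᵢᵃ}(v) ≤ σ_{Pᵢᵃ}(v) + β‖v‖_∞ for all v, where each Pᵢᵃ is contained in the probability simplex. Define the operator H on Q-factors (functions Q : X × A → ℝ) by (HQ)(i,a) = c(i,a) + ϑ σ_{P̂ᵢᵃ}(v_Q), where v_Q(j) = min_{a'} Q(j,a'). If ϑ(1+β) < 1, then H is a contraction with respect to the ℓ∞ norm with contraction factor ϑ(1+β): ‖HQ − HQ'‖_∞ ≤ ϑ(1+β)‖Q − Q'‖_∞. -/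
import Mathlib


open Finset

/-- dot product on `X → ℝ` for a fintype `X` -/
noncomputable def dot {X : Type*} [Fintype X] (q v : X → ℝ) : ℝ := ∑ i, q i * v i

noncomputable def supp {X : Type*} [Fintype X] (S : Set (X → ℝ)) (v : X → ℝ) : ℝ :=
  sSup ((fun q => dot q v) '' S)

noncomputable def linf {X : Type*} [Fintype X] (v : X → ℝ) : ℝ := ⨆ i, |v i|

/-- probability simplex over `X` -/
def simplex (X : Type*) [Fintype X] : Set (X → ℝ) :=
  {q | (∀ i, 0 ≤ q i) ∧ ∑ i, q i = 1}

/-- value function of a Q-factor -/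
noncomputable def vQ {X A : Type*} [Fintype A] (Q : X × A → ℝ) : X → ℝ :=
  fun j => ⨅ a, Q (j, a)

section Aux

lemma abs_le_linf' {X : Type*} [Fintype X] (v : X → ℝ) (i : X) : |v i| ≤ linf v := by
  unfold linf; exact le_ciSup (Finite.bddAbove_range fun j => |v j|) i

lemma linf_nonneg' {X : Type*} [Fintype X] [Nonempty X] (v : X → ℝ) : 0 ≤ linf v :=
  le_trans (abs_nonneg _) (abs_le_linf' v (Classical.arbitrary X))

lemma linf_le' {X : Type*} [Fintype X] [Nonempty X] (v : X → ℝ) (M : ℝ)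
    (h : ∀ i, |v i| ≤ M) : linf v ≤ M := ciSup_le h

lemma dot_le_supp' {X : Type*} [Fintype X] {S : Set (X → ℝ)} (hc : IsCompact S)
    {q : X → ℝ} (hq : q ∈ S) (v : X → ℝ) : dot q v ≤ supp S v := by
  apply le_csSup
  · exact (hc.image (by unfold dot; continuity)).bddAbove
  · exact Set.mem_image_of_mem _ hq

lemma supp_le' {X : Type*} [Fintype X] {S : Set (X → ℝ)} (hne : S.Nonempty)
    (v : X → ℝ) (M : ℝ) (h : ∀ q ∈ S, dot q v ≤ M) : supp S v ≤ M :=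
  csSup_le (hne.image _) (by rintro x ⟨q, hq, rfl⟩; exact h q hq)

lemma dot_sub {X : Type*} [Fintype X] (q v w : X → ℝ) :
    dot q (fun i => v i - w i) = dot q v - dot q w := by
  simp [dot, mul_sub, Finset.sum_sub_distrib]

lemma supp_simplex_le {X : Type*} [Fintype X] [Nonempty X] {P : Set (X → ℝ)}
    (hne : P.Nonempty) (hsub : P ⊆ simplex X) (v : X → ℝ) : supp P v ≤ linf v := by
  refine supp_le' hne v _ (fun q hq => ?_)
  obtain ⟨hq0, hq1⟩ := hsub hq
  calc dot q v ≤ ∑ i, q i * linf v := by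
        refine Finset.sum_le_sum (fun i _ => ?_)
        exact mul_le_mul_of_nonneg_left
          ((le_abs_self _).trans (abs_le_linf' v i)) (hq0 i)
    _ = linf v := by rw [← Finset.sum_mul, hq1, one_mul]

end Aux

theorem stmt3 {X A : Type*} [Fintype X] [Fintype A] [Nonempty X] [Nonempty A]
    (P Ph : X × A → Set (X → ℝ))
    (hPc : ∀ ia, IsCompact (P ia)) (hPne : ∀ ia, (P ia).Nonempty)
    (hPsimplex : ∀ ia, P ia ⊆ simplex X)
    (hPhc : ∀ ia, IsCompact (Ph ia)) (hPhne : ∀ ia, (Ph ia).Nonempty)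
    (β : ℝ) (hβ : 0 ≤ β)
    (hsum : ∀ ia, ∀ q ∈ Ph ia, ∑ j, q j ≤ 1 + β)
    (hover : ∀ ia, ∀ v : X → ℝ, supp (Ph ia) v ≤ supp (P ia) v + β * linf v)
    (c : X × A → ℝ) (ϑ : ℝ) (hϑ0 : 0 < ϑ) (hϑ1 : ϑ < 1)
    (hcontr : ϑ * (1 + β) < 1)
    (H : (X × A → ℝ) → (X × A → ℝ))
    (hH : ∀ Q ia, H Q ia = c ia + ϑ * supp (Ph ia) (vQ Q)) :
    ∀ Q Q' : X × A → ℝ,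
      linf (fun ia => H Q ia - H Q' ia) ≤ ϑ * (1 + β) * linf (fun ia => Q ia - Q' ia) := by
  intro Q Q'
  set L : ℝ := linf (fun ia => Q ia - Q' ia) with hL
  have hL0 : 0 ≤ L := linf_nonneg' _
  -- step 1: pointwise bounds on vQ
  have hvQ : ∀ j, |vQ Q j - vQ Q' j| ≤ L := by
    intro j
    have key : ∀ R R' : X × A → ℝ, (∀ ia, R ia ≤ R' ia + L) →
        vQ R j ≤ vQ R' j + L := by
      intro R R' h
      unfold vQ
      rw [← sub_le_iff_le_add]
      refine le_ciInf (fun a => ?_)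
      have h1 : (⨅ a, R (j, a)) ≤ R (j, a) :=
        ciInf_le (Finite.bddBelow_range _) a
      have h2 := h (j, a)
      linarith
    have hQ : ∀ ia : X × A, Q ia ≤ Q' ia + L := by
      intro ia
      have := abs_le_linf' (fun ia => Q ia - Q' ia) ia
      rw [← hL] at this
      have := abs_le.1 this
      linarith [this.2]
    have hQ' : ∀ ia : X × A, Q' ia ≤ Q ia + L := by
      intro ia
      have := abs_le_linf' (fun ia => Q ia - Q' ia) ia
      rw [← hL] at this
      have := abs_le.1 this
      linarith [this.1]
    have k1 := key Q Q' hQ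
    have k2 := key Q' Q hQ'
    rw [abs_le]
    constructor <;> linarith
  -- step 2: one-sided bound on supp difference
  have hsupp : ∀ ia, ∀ v v' : X → ℝ,
      supp (Ph ia) v - supp (Ph ia) v' ≤ (1 + β) * linf (fun i => v i - v' i) := by
    intro ia v v'
    have h1 : supp (Ph ia) v ≤ supp (Ph ia) (fun i => v i - v' i) + supp (Ph ia) v' := by
      refine supp_le' (hPhne ia) v _ (fun q hq => ?_)
      have : dot q v = dot q (fun i => v i - v' i) + dot q v' := by
        rw [dot_sub]; ring
      rw [this]
      exact add_le_add (dot_le_supp' (hPhc ia) hq _) (dot_le_supp' (hPhc ia) hq _)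
    have h2 : supp (Ph ia) (fun i => v i - v' i) ≤ (1 + β) * linf (fun i => v i - v' i) := by
      calc supp (Ph ia) (fun i => v i - v' i)
          ≤ supp (P ia) (fun i => v i - v' i) + β * linf (fun i => v i - v' i) :=
            hover ia _
        _ ≤ linf (fun i => v i - v' i) + β * linf (fun i => v i - v' i) := by
            gcongr
            exact supp_simplex_le (hPne ia) (hPsimplex ia) _
        _ = (1 + β) * linf (fun i => v i - v' i) := by ring
    linarith
  -- step 3: linf of vQ difference
  have hvL : linf (fun j => vQ Q j - vQ Q' j) ≤ L := linf_le' _ _ hvQ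
  -- combine
  refine linf_le' _ _ (fun ia => ?_)
  rw [hH, hH]
  have habs : ∀ s s' : ℝ, (c ia + ϑ * s) - (c ia + ϑ * s') = ϑ * (s - s') := by
    intro s s'; ring
  rw [habs, abs_mul, abs_of_pos hϑ0]
  have h1 := hsupp ia (vQ Q) (vQ Q')
  have h2 := hsupp ia (vQ Q') (vQ Q)
  have hlinf_swap : linf (fun i => vQ Q' i - vQ Q i) = linf (fun i => vQ Q i - vQ Q' i) := by
    unfold linf; congr 1; ext i; rw [abs_sub_comm]
  rw [hlinf_swap] at h2
  have habs2 : |supp (Ph ia) (vQ Q) - supp (Ph ia) (vQ Q')|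
      ≤ (1 + β) * linf (fun j => vQ Q j - vQ Q' j) := abs_sub_le_iff.2 ⟨h1, h2⟩
  calc ϑ * |supp (Ph ia) (vQ Q) - supp (Ph ia) (vQ Q')|
      ≤ ϑ * ((1 + β) * linf (fun j => vQ Q j - vQ Q' j)) := by gcongr
    _ ≤ ϑ * ((1 + β) * L) := by
        have : 0 ≤ 1 + β := by linarith
        gcongr
    _ = ϑ * (1 + β) * L := by ring
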